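/- arXiv:2107.12439 — 3 statements merged into one kernel-verified Lean document; each statement's English description precedes it below -/
import Mathlib

section
/- Let w ∈ [0,1] and let z be a real number with z > 0. Then the equation cosh u − cosh(w·u) = z has no solution u in the closed-left-open-top half-strip {u ∈ ℂ : Re(u) ≥ 0 and 0 < Im(u) < π}. -/
/-!
Since `cosh u - cosh (w u) = 2 sinh (((1 + w) / 2) u) sinh (((1 - w) / 2) u)` and both arguments
have imaginary part in `(0, π)` when `w < 1`, both sinh factors lie in the open upper half-plane
(`Im sinh v = cosh (Re v) sin (Im v)`). A product of two numbers of argument in `(0, π)` has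
argument in `(0, 2π)`, so it is never a positive real. For `w = 1` the left side vanishes.
-/

open Complex

namespace Complex

theorem sinh_im (z : ℂ) : (sinh z).im = Real.cosh z.re * Real.sin z.im := by
  conv_lhs => rw [← re_add_im z, sinh_add, sinh_mul_I, cosh_mul_I]
  simp [← ofReal_sinh, ← ofReal_cosh, ← ofReal_sin, ← ofReal_cos]

theorem cosh_sub_cosh (x y : ℂ) :
    cosh x - cosh y = 2 * sinh ((x + y) / 2) * sinh ((x - y) / 2) := by
  have key (a b : ℂ) : cosh (a + b) - cosh (a - b) = 2 * sinh a * sinh b := by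
    rw [cosh_add, cosh_sub]; ring
  convert key ((x + y) / 2) ((x - y) / 2) using 3 <;> ring

theorem mul_ne_ofReal_of_im_pos {a b : ℂ} (ha : 0 < a.im) (hb : 0 < b.im) {r : ℝ}
    (hr : 0 < r) : a * b ≠ r := by
  intro h
  have him := congrArg im h
  have hre := congrArg re h
  simp only [mul_im, mul_re, ofReal_im, ofReal_re] at him hre
  nlinarith [mul_pos ha hb, sq_nonneg (a.im * b.re), sq_nonneg (a.re * b.im)]

theorem sinh_im_pos {z : ℂ} (h0 : 0 < z.im) (hπ : z.im < Real.pi) : 0 < (sinh z).im := by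
  rw [sinh_im]
  exact mul_pos (Real.cosh_pos _) (Real.sin_pos_of_pos_of_lt_pi h0 hπ)

theorem sinh_ofReal_mul_im_pos {t : ℝ} (ht0 : 0 < t) (ht1 : t ≤ 1) {u : ℂ} (h0 : 0 < u.im)
    (hπ : u.im < Real.pi) : 0 < (sinh (t * u)).im := by
  apply sinh_im_pos <;> rw [im_ofReal_mul]
  · positivity
  · nlinarith

end Complex

/-- For `w ∈ [0,1]` and real `z > 0`, the equation `cosh u − cosh (w u) = z` has no
solution `u` in the half-strip `{Re u ≥ 0, 0 < Im u < π}`. -/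
theorem no_solution_in_half_strip (w : ℝ) (hw : w ∈ Set.Icc (0 : ℝ) 1)
    (z : ℝ) (hz : 0 < z) :
    ¬ ∃ u : ℂ, 0 ≤ u.re ∧ 0 < u.im ∧ u.im < Real.pi ∧
        Complex.cosh u - Complex.cosh ((w : ℂ) * u) = (z : ℂ) := by
  rintro ⟨u, -, h0, hπ, heq⟩
  obtain ⟨hw0, hw1⟩ := hw
  rcases hw1.lt_or_eq with hw1 | rfl
  · have hsplit : cosh u - cosh (w * u) =
        2 * (sinh (((1 + w) / 2 : ℝ) * u) * sinh (((1 - w) / 2 : ℝ) * u)) := by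
      rw [cosh_sub_cosh]; push_cast; ring_nf
    have ha : 0 < (sinh (((1 + w) / 2 : ℝ) * u)).im :=
      sinh_ofReal_mul_im_pos (by linarith) (by linarith) h0 hπ
    have hb : 0 < (sinh (((1 - w) / 2 : ℝ) * u)).im :=
      sinh_ofReal_mul_im_pos (by linarith) (by linarith) h0 hπ
    refine mul_ne_ofReal_of_im_pos ha hb (half_pos hz) ?_
    push_cast at hsplit ⊢
    linear_combination (heq - hsplit) / 2
  · simp only [ofReal_one, one_mul, sub_self] at heq
    exact hz.ne (mod_cast heq)
end

section
/- Fix σ₀ > 0. There exists a function G : ℂ → ℂ which is holomorphic on the open strip {u ∈ ℂ : |Im(u)| < π}, is odd on this strip (G(−u) = −G(u) whenever |Im(u)| < π), and satisfies G(u) = g(u) for every real u > 0. -/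
open scoped Real

/-- The SABR payoff function
`g(u) = sinh u · ∫_0^u sin((σ₀/2) sinh s) / (sinh s · √(cosh u − cosh s)) ds`. -/
noncomputable def sabrPayoff (σ₀ u : ℝ) : ℝ :=
  Real.sinh u *
    ∫ s in (0 : ℝ)..u,
      Real.sin (σ₀ / 2 * Real.sinh s) /
        (Real.sinh s * Real.sqrt (Real.cosh u - Real.cosh s))

/-!
The substitution `cosh s = 1 + (cosh u - 1) cos² θ` (`s = sabrSubst (cosh u - 1) θ`) turns the
integral defining `g` into
`g(u) = 2 sinh u ∫₀^{π/2} a · sinc (a w) / √B dθ`, where `a = σ₀ / 2`,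
`B = sabrQuad u θ = 2 + (cosh u - 1) cos² θ` and `w = sabrArg u θ = √2 cos θ sinh (u / 2) √B`,
which is `sinh s` for real `u ≥ 0`.
This integrand extends holomorphically to the strip `|Im u| < π`: sinc is entire, and `B` is a
convex combination of `2` and `1 + cosh u`, which stays off `(-∞, 0]` on the strip, so `√B` has a
holomorphic branch there. A parametric integral of a jointly continuous integrand that is
holomorphic in the parameter is holomorphic, since Cauchy's estimates dominate the derivatives.
The extension is odd because `B` is even in `u`, `w` is odd, sinc is even and `sinh` is odd.
-/

open Complex MeasureTheory Set Metric Filter Topology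
open scoped Interval

theorem aestronglyMeasurable_deriv_param {𝕜 E α : Type*} [NontriviallyNormedField 𝕜]
    [NormedAddCommGroup E] [NormedSpace 𝕜 E] [MeasurableSpace α] {μ : Measure α}
    {F : 𝕜 → α → E} {z₀ : 𝕜}
    (hF_meas : ∀ᶠ z in 𝓝 z₀, AEStronglyMeasurable (F z) μ)
    (hF_diff : ∀ᵐ t ∂μ, DifferentiableAt 𝕜 (F · t) z₀) :
    AEStronglyMeasurable (fun t => deriv (F · t) z₀) μ := by
  obtain ⟨z, hz⟩ := (𝓝[≠] z₀).exists_seq_tendsto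
  obtain ⟨N, hN⟩ :=
    eventually_atTop.mp (hz.eventually (eventually_nhdsWithin_of_eventually_nhds hF_meas))
  have hzN : Tendsto (fun n => z (n + N)) atTop (𝓝[≠] z₀) := hz.comp (tendsto_add_atTop_nat N)
  refine aestronglyMeasurable_of_tendsto_ae atTop
    (f := fun n t => slope (F · t) z₀ (z (n + N))) (fun n => ?_) ?_
  · simp only [slope_def_module]
    exact ((hN _ (Nat.le_add_left N n)).sub hF_meas.self_of_nhds).const_smul _
  · filter_upwards [hF_diff] with t ht using ht.hasDerivAt.tendsto_slope.comp hzN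

lemma norm_deriv_le_of_forall_mem_closedBall_norm_le {E : Type*} [NormedAddCommGroup E]
    [NormedSpace ℂ E] {f : ℂ → E} {z₀ : ℂ} {r M : ℝ} (hr : 0 < r)
    (hf : DifferentiableOn ℂ f (closedBall z₀ (2 * r)))
    (hM : ∀ w ∈ closedBall z₀ (2 * r), ‖f w‖ ≤ M)
    {z : ℂ} (hz : z ∈ ball z₀ r) : ‖deriv f z‖ ≤ M / r := by
  rw [mem_ball] at hz
  refine norm_deriv_le_of_forall_mem_sphere_norm_le hr
    (hf.diffContOnCl_ball (closedBall_subset_closedBall' (by linarith))) fun w hw => hM w ?_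
  rw [mem_sphere] at hw
  rw [mem_closedBall]
  linarith [dist_triangle w z z₀]

theorem differentiableOn_intervalIntegral_of_continuousOn
    {E : Type*} [NormedAddCommGroup E] [NormedSpace ℂ E] [CompleteSpace E]
    {μ : Measure ℝ} [IsLocallyFiniteMeasure μ] {F : ℂ → ℝ → E} {U : Set ℂ} {a b : ℝ}
    (hU : IsOpen U) (hF : ContinuousOn (Function.uncurry F) (U ×ˢ [[a, b]]))
    (hF_diff : ∀ t ∈ [[a, b]], DifferentiableOn ℂ (F · t) U) :
    DifferentiableOn ℂ (fun z => ∫ t in a..b, F z t ∂μ) U := by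
  intro z₀ hz₀
  have hcont : ∀ z ∈ U, ContinuousOn (F z) [[a, b]] := fun z hz =>
    hF.comp (continuousOn_const.prodMk continuousOn_id) fun t ht => ⟨hz, ht⟩
  have hmeas : ∀ᶠ z in 𝓝 z₀, AEStronglyMeasurable (F z) (μ.restrict (Ι a b)) :=
    eventually_of_mem (hU.mem_nhds hz₀) fun z hz =>
      ((hcont z hz).mono uIoc_subset_uIcc).aestronglyMeasurable measurableSet_uIoc
  have hdiff : ∀ t ∈ Ι a b, ∀ z ∈ U, DifferentiableAt ℂ (F · t) z := fun t ht z hz =>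
    (hF_diff t (uIoc_subset_uIcc ht)).differentiableAt (hU.mem_nhds hz)
  obtain ⟨r, hr, hball⟩ : ∃ r > 0, closedBall z₀ (2 * r) ⊆ U := by
    obtain ⟨ε, hε, hεU⟩ := nhds_basis_closedBall.mem_iff.mp (hU.mem_nhds hz₀)
    exact ⟨ε / 2, half_pos hε, by rwa [mul_div_cancel₀ _ two_ne_zero]⟩
  obtain ⟨M, hM⟩ := ((isCompact_closedBall z₀ (2 * r)).prod isCompact_uIcc)
    |>.exists_bound_of_continuousOn (hF.mono (prod_mono hball subset_rfl))
  have hball_U : ball z₀ r ⊆ U :=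
    (ball_subset_closedBall.trans (closedBall_subset_closedBall (by linarith))).trans hball
  refine (intervalIntegral.hasDerivAt_integral_of_dominated_loc_of_deriv_le
    (F' := fun z t => deriv (F · t) z) (bound := fun _ => M / r) (ball_mem_nhds z₀ hr) hmeas
    (hcont z₀ hz₀).intervalIntegrable ?_ ?_ intervalIntegrable_const
    (Eventually.of_forall fun t ht z hz => (hdiff t ht z (hball_U hz)).hasDerivAt)).2
    |>.differentiableAt.differentiableWithinAt
  · exact aestronglyMeasurable_deriv_param hmeas ((ae_restrict_iff' measurableSet_uIoc).mpr
      (Eventually.of_forall fun t ht => hdiff t ht z₀ hz₀))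
  · exact Eventually.of_forall fun t ht z hz =>
      norm_deriv_le_of_forall_mem_closedBall_norm_le hr
        ((hF_diff t (uIoc_subset_uIcc ht)).mono hball)
        (fun w hw => hM (w, t) ⟨hw, uIoc_subset_uIcc ht⟩) hz

lemma cosh_re (u : ℂ) : (cosh u).re = Real.cosh u.re * Real.cos u.im := by
  nth_rw 1 [← re_add_im u]
  rw [cosh_add, cosh_mul_I, sinh_mul_I]
  simp [cos_ofReal_re, sin_ofReal_re, sinh_ofReal_re]

lemma cosh_im (u : ℂ) : (cosh u).im = Real.sinh u.re * Real.sin u.im := by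
  nth_rw 1 [← re_add_im u]
  rw [cosh_add, cosh_mul_I, sinh_mul_I]
  simp [cos_ofReal_re, sin_ofReal_re, sinh_ofReal_re]

lemma one_add_cosh_mem_slitPlane {u : ℂ} (hu : |u.im| < π) : 1 + cosh u ∈ slitPlane := by
  rw [mem_slitPlane_iff, add_re, add_im, one_re, one_im, zero_add, cosh_re, cosh_im]
  by_cases hy : u.im = 0
  · left
    rw [hy, Real.cos_zero, mul_one]
    linarith [Real.cosh_pos u.re]
  by_cases hx : u.re = 0
  · left
    have : Real.cos π < Real.cos |u.im| :=
      Real.cos_lt_cos_of_nonneg_of_le_pi (abs_nonneg _) le_rfl hu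
    rw [hx, Real.cosh_zero, one_mul, ← Real.cos_abs]
    linarith [Real.cos_pi]
  · right
    have hsin : Real.sin u.im ≠ 0 := by
      rwa [Ne, Real.sin_eq_zero_iff_of_lt_of_lt (neg_lt_of_abs_lt hu) (lt_of_abs_lt hu)]
    exact mul_ne_zero (Real.sinh_ne_zero.mpr hx) hsin

noncomputable def csinc : ℂ → ℂ := dslope sin 0

lemma csinc_of_ne_zero {z : ℂ} (hz : z ≠ 0) : csinc z = sin z / z := by
  simp [csinc, dslope_of_ne _ hz, slope_def_field]

lemma differentiable_csinc : Differentiable ℂ csinc :=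
  differentiableOn_univ.mp <|
    (differentiableOn_dslope univ_mem).mpr differentiable_sin.differentiableOn

lemma csinc_neg (z : ℂ) : csinc (-z) = csinc z := by
  rcases eq_or_ne z 0 with rfl | hz
  · rw [neg_zero]
  · rw [csinc_of_ne_zero (neg_ne_zero.mpr hz), csinc_of_ne_zero hz, sin_neg, neg_div_neg_eq]

lemma mul_csinc_mul (a : ℂ) {w : ℂ} (hw : w ≠ 0) : a * csinc (a * w) = sin (a * w) / w := by
  rcases eq_or_ne a 0 with rfl | ha
  · simp
  · rw [csinc_of_ne_zero (mul_ne_zero ha hw)]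
    field_simp

noncomputable def sabrQuad (u : ℂ) (θ : ℝ) : ℂ := 2 + (cosh u - 1) * (Real.cos θ : ℂ) ^ 2

noncomputable def sabrArg (u : ℂ) (θ : ℝ) : ℂ :=
  (√2 : ℝ) * Real.cos θ * sinh (u / 2) * sabrQuad u θ ^ (1 / 2 : ℂ)

noncomputable def sabrIntegrand (a : ℝ) (u : ℂ) (θ : ℝ) : ℂ :=
  a * csinc (a * sabrArg u θ) * sabrQuad u θ ^ (-(1 / 2) : ℂ)

noncomputable def sabrExtension (a : ℝ) (u : ℂ) : ℂ :=
  2 * sinh u * ∫ θ in (0 : ℝ)..π / 2, sabrIntegrand a u θ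

lemma sabrQuad_mem_slitPlane {u : ℂ} (hu : |u.im| < π) (θ : ℝ) : sabrQuad u θ ∈ slitPlane := by
  -- `sabrQuad u θ = (1 - cos² θ) • 2 + cos² θ • (1 + cosh u)`
  convert starConvex_ofReal_slitPlane two_pos (one_add_cosh_mem_slitPlane hu)
    (sub_nonneg.mpr (Real.cos_sq_le_one θ)) (sq_nonneg (Real.cos θ)) (sub_add_cancel 1 _) using 1
  simp only [sabrQuad, real_smul]
  push_cast
  ring

lemma continuousOn_sabrIntegrand (a : ℝ) :
    ContinuousOn (Function.uncurry (sabrIntegrand a)) ({u : ℂ | |u.im| < π} ×ˢ univ) := by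
  have hB : Continuous fun p : ℂ × ℝ => sabrQuad p.1 p.2 := by unfold sabrQuad; fun_prop
  have hpow (c : ℂ) :
      ContinuousOn (fun p : ℂ × ℝ => sabrQuad p.1 p.2 ^ c) ({u : ℂ | |u.im| < π} ×ˢ univ) :=
    hB.continuousOn.cpow_const fun p hp => sabrQuad_mem_slitPlane hp.1 p.2
  have hsinc := differentiable_csinc.continuous
  unfold Function.uncurry sabrIntegrand sabrArg
  fun_prop

lemma differentiableOn_sabrIntegrand (a θ : ℝ) :
    DifferentiableOn ℂ (sabrIntegrand a · θ) {u : ℂ | |u.im| < π} := by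
  intro u hu
  have hsinc := differentiable_csinc
  have hslit := sabrQuad_mem_slitPlane hu θ
  unfold sabrIntegrand sabrArg sabrQuad
  apply DifferentiableAt.differentiableWithinAt
  fun_prop (disch := exact hslit)

lemma differentiableOn_sabrExtension (a : ℝ) :
    DifferentiableOn ℂ (sabrExtension a) {u : ℂ | |u.im| < π} :=
  (differentiable_sinh.const_mul 2).differentiableOn.mul <|
    differentiableOn_intervalIntegral_of_continuousOn
      (isOpen_lt (continuous_abs.comp continuous_im) continuous_const)
      ((continuousOn_sabrIntegrand a).mono (prod_mono subset_rfl (subset_univ _)))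
      fun θ _ => differentiableOn_sabrIntegrand a θ

lemma sabrQuad_neg (u : ℂ) (θ : ℝ) : sabrQuad (-u) θ = sabrQuad u θ := by
  rw [sabrQuad, sabrQuad, cosh_neg]

lemma sabrArg_neg (u : ℂ) (θ : ℝ) : sabrArg (-u) θ = -sabrArg u θ := by
  rw [sabrArg, sabrArg, sabrQuad_neg, neg_div, sinh_neg]
  ring

lemma sabrIntegrand_neg (a : ℝ) (u : ℂ) (θ : ℝ) :
    sabrIntegrand a (-u) θ = sabrIntegrand a u θ := by
  rw [sabrIntegrand, sabrIntegrand, sabrQuad_neg, sabrArg_neg, mul_neg, csinc_neg]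

lemma sabrExtension_neg (a : ℝ) (u : ℂ) : sabrExtension a (-u) = -sabrExtension a u := by
  simp only [sabrExtension, sabrIntegrand_neg, sinh_neg]
  ring

noncomputable def sabrSubst (c θ : ℝ) : ℝ :=
  Real.arsinh (√c * Real.cos θ * √(2 + c * Real.cos θ ^ 2))

section Substitution

variable {c : ℝ}

lemma sinh_sabrSubst (θ : ℝ) :
    Real.sinh (sabrSubst c θ) = √c * Real.cos θ * √(2 + c * Real.cos θ ^ 2) :=
  Real.sinh_arsinh _

lemma cosh_sabrSubst (hc : 0 ≤ c) (θ : ℝ) :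
    Real.cosh (sabrSubst c θ) = 1 + c * Real.cos θ ^ 2 := by
  have hB : 0 ≤ 2 + c * Real.cos θ ^ 2 := by positivity
  rw [sabrSubst, Real.cosh_arsinh, mul_pow, mul_pow, Real.sq_sqrt hc, Real.sq_sqrt hB,
    show 1 + c * Real.cos θ ^ 2 * (2 + c * Real.cos θ ^ 2) = (1 + c * Real.cos θ ^ 2) ^ 2 by ring,
    Real.sqrt_sq (by positivity)]

lemma hasDerivAt_sabrSubst (hc : 0 < c) (θ : ℝ) :
    HasDerivAt (sabrSubst c) (-(2 * √c * Real.sin θ / √(2 + c * Real.cos θ ^ 2))) θ := by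
  have hB : 0 < 2 + c * Real.cos θ ^ 2 := by positivity
  have hw : HasDerivAt (fun θ => √c * Real.cos θ * √(2 + c * Real.cos θ ^ 2))
      (√c * (-Real.sin θ) * √(2 + c * Real.cos θ ^ 2) + √c * Real.cos θ *
        ((c * (2 * Real.cos θ * -Real.sin θ)) / (2 * √(2 + c * Real.cos θ ^ 2)))) θ := by
    refine ((Real.hasDerivAt_cos θ).const_mul √c).mul (HasDerivAt.sqrt ?_ hB.ne')
    simpa using (((Real.hasDerivAt_cos θ).pow 2).const_mul c).const_add 2
  convert hw.arsinh using 1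
  · rfl
  rw [← Real.cosh_arsinh, ← sabrSubst, cosh_sabrSubst hc.le, smul_eq_mul]
  have hsB := Real.sq_sqrt hB.le
  have hsB0 : 0 < √(2 + c * Real.cos θ ^ 2) := Real.sqrt_pos.mpr hB
  field_simp
  linear_combination Real.sin θ * hsB

lemma continuous_sabrSubst (hc : 0 < c) : Continuous (sabrSubst c) :=
  continuous_iff_continuousAt.mpr fun θ => (hasDerivAt_sabrSubst hc θ).continuousAt

lemma strictAntiOn_sabrSubst (hc : 0 < c) : StrictAntiOn (sabrSubst c) (Icc 0 (π / 2)) := by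
  refine strictAntiOn_of_deriv_neg (convex_Icc _ _) (continuous_sabrSubst hc).continuousOn
    fun θ hθ => ?_
  rw [interior_Icc] at hθ
  have hsin : 0 < Real.sin θ :=
    Real.sin_pos_of_pos_of_lt_pi hθ.1 (by linarith [hθ.2, Real.pi_pos])
  rw [(hasDerivAt_sabrSubst hc θ).deriv, neg_lt_zero]
  positivity

lemma sabrSubst_pi_div_two : sabrSubst c (π / 2) = 0 := by
  simp [sabrSubst]

lemma sabrSubst_cosh_sub_one_zero {u : ℝ} (hu : 0 ≤ u) : sabrSubst (Real.cosh u - 1) 0 = u := by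
  have hc : 0 ≤ Real.cosh u - 1 := sub_nonneg.mpr (Real.one_le_cosh u)
  conv_rhs => rw [← Real.arsinh_sinh u]
  rw [sabrSubst, Real.cos_zero, mul_one, one_pow, mul_one,
    ← Real.sqrt_mul hc, show (Real.cosh u - 1) * (2 + (Real.cosh u - 1)) = Real.sinh u ^ 2 by
      linear_combination Real.cosh_sq_sub_sinh_sq u, Real.sqrt_sq (Real.sinh_nonneg_iff.mpr hu)]

lemma image_sabrSubst_Ioo {u : ℝ} (hu : 0 < u) :
    sabrSubst (Real.cosh u - 1) '' Ioo 0 (π / 2) = Ioo 0 u := by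
  have hc : 0 < Real.cosh u - 1 := sub_pos.mpr (Real.one_lt_cosh.mpr hu.ne')
  rw [(continuous_sabrSubst hc).continuousOn.image_Ioo_of_strictAntiOn (by positivity)
    (strictAntiOn_sabrSubst hc), sabrSubst_pi_div_two, sabrSubst_cosh_sub_one_zero hu.le]

lemma abs_deriv_sabrSubst_smul (hc : 0 < c) (a : ℝ) {θ : ℝ} (hθ : θ ∈ Ioo 0 (π / 2)) :
    |-(2 * √c * Real.sin θ / √(2 + c * Real.cos θ ^ 2))| •
        (Real.sin (a * Real.sinh (sabrSubst c θ)) /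
          (Real.sinh (sabrSubst c θ) * √(1 + c - Real.cosh (sabrSubst c θ)))) =
      2 * (Real.sin (a * Real.sinh (sabrSubst c θ)) /
        (Real.sinh (sabrSubst c θ) * √(2 + c * Real.cos θ ^ 2))) := by
  have hsin : 0 < Real.sin θ :=
    Real.sin_pos_of_pos_of_lt_pi hθ.1 (by linarith [hθ.2, Real.pi_pos])
  have hgap : √(1 + c - Real.cosh (sabrSubst c θ)) = √c * Real.sin θ := by
    rw [cosh_sabrSubst hc.le, show 1 + c - (1 + c * Real.cos θ ^ 2) = c * Real.sin θ ^ 2 by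
      rw [Real.sin_sq]; ring, Real.sqrt_mul hc.le, Real.sqrt_sq hsin.le]
  have hsc : 0 < √c := Real.sqrt_pos.mpr hc
  have hsB : 0 < √(2 + c * Real.cos θ ^ 2) := Real.sqrt_pos.mpr (by positivity)
  rw [hgap, abs_neg, abs_of_pos (by positivity), smul_eq_mul]
  field_simp

end Substitution

lemma integral_eq_two_mul_integral_sabrSubst {u : ℝ} (hu : 0 < u) (a : ℝ) :
    ∫ s in (0 : ℝ)..u, Real.sin (a * Real.sinh s) / (Real.sinh s * √(Real.cosh u - Real.cosh s)) =
      2 * ∫ θ in Ioo 0 (π / 2), Real.sin (a * Real.sinh (sabrSubst (Real.cosh u - 1) θ)) /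
        (Real.sinh (sabrSubst (Real.cosh u - 1) θ) *
          √(2 + (Real.cosh u - 1) * Real.cos θ ^ 2)) := by
  have hc : 0 < Real.cosh u - 1 := sub_pos.mpr (Real.one_lt_cosh.mpr hu.ne')
  rw [intervalIntegral.integral_of_le hu.le, integral_Ioc_eq_integral_Ioo,
    ← image_sabrSubst_Ioo hu, integral_image_eq_integral_abs_deriv_smul measurableSet_Ioo
      (fun θ _ => (hasDerivAt_sabrSubst hc θ).hasDerivWithinAt)
      ((strictAntiOn_sabrSubst hc).injOn.mono Ioo_subset_Icc_self), ← integral_const_mul]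
  refine setIntegral_congr_fun measurableSet_Ioo fun θ hθ => ?_
  rw [← abs_deriv_sabrSubst_smul hc a hθ, add_sub_cancel]

lemma sqrt_cosh_sub_one {u : ℝ} (hu : 0 ≤ u) : √(Real.cosh u - 1) = √2 * Real.sinh (u / 2) := by
  have hcosh := Real.cosh_two_mul (u / 2)
  rw [mul_div_cancel₀ _ two_ne_zero] at hcosh
  rw [show Real.cosh u - 1 = 2 * Real.sinh (u / 2) ^ 2 by
      linear_combination hcosh + Real.cosh_sq_sub_sinh_sq (u / 2),
    Real.sqrt_mul zero_le_two, Real.sqrt_sq (Real.sinh_nonneg_iff.mpr (by positivity))]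

lemma sabrQuad_ofReal (u θ : ℝ) :
    sabrQuad u θ = ((2 + (Real.cosh u - 1) * Real.cos θ ^ 2 : ℝ) : ℂ) := by
  push_cast [sabrQuad]
  rfl

lemma sabrQuad_ofReal_cpow (u θ c : ℝ) :
    sabrQuad u θ ^ (c : ℂ) = (((2 + (Real.cosh u - 1) * Real.cos θ ^ 2) ^ c : ℝ) : ℂ) := by
  rw [sabrQuad_ofReal, ofReal_cpow (by nlinarith [Real.one_le_cosh u, sq_nonneg (Real.cos θ)])]

lemma sabrArg_ofReal {u : ℝ} (hu : 0 ≤ u) (θ : ℝ) :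
    sabrArg u θ = (Real.sinh (sabrSubst (Real.cosh u - 1) θ) : ℂ) := by
  rw [sabrArg, sinh_sabrSubst, sqrt_cosh_sub_one hu,
    show (1 / 2 : ℂ) = ((1 / 2 : ℝ) : ℂ) by norm_num, sabrQuad_ofReal_cpow,
    ← Real.sqrt_eq_rpow]
  push_cast
  ring

lemma sabrIntegrand_ofReal {u : ℝ} (hu : 0 < u) (a : ℝ) {θ : ℝ} (hθ : θ ∈ Ioo 0 (π / 2)) :
    sabrIntegrand a u θ = ((Real.sin (a * Real.sinh (sabrSubst (Real.cosh u - 1) θ)) /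
      (Real.sinh (sabrSubst (Real.cosh u - 1) θ) *
        √(2 + (Real.cosh u - 1) * Real.cos θ ^ 2)) : ℝ) : ℂ) := by
  have hc : 0 < Real.cosh u - 1 := sub_pos.mpr (Real.one_lt_cosh.mpr hu.ne')
  have hcos : 0 < Real.cos θ :=
    Real.cos_pos_of_mem_Ioo ⟨by linarith [hθ.1, Real.pi_pos], hθ.2⟩
  have hw : Real.sinh (sabrSubst (Real.cosh u - 1) θ) ≠ 0 := by
    rw [sinh_sabrSubst]
    have := Real.sqrt_pos.mpr hc
    have : 0 < √(2 + (Real.cosh u - 1) * Real.cos θ ^ 2) := Real.sqrt_pos.mpr (by positivity)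
    positivity
  rw [sabrIntegrand, sabrArg_ofReal hu.le, mul_csinc_mul _ (ofReal_ne_zero.mpr hw),
    show (-(1 / 2) : ℂ) = ((-(1 / 2) : ℝ) : ℂ) by norm_num, sabrQuad_ofReal_cpow,
    Real.rpow_neg (by positivity), ← Real.sqrt_eq_rpow]
  push_cast
  ring

lemma sabrExtension_ofReal {u : ℝ} (hu : 0 < u) (a : ℝ) :
    sabrExtension a u = ((Real.sinh u * ∫ s in (0 : ℝ)..u,
      Real.sin (a * Real.sinh s) / (Real.sinh s * √(Real.cosh u - Real.cosh s)) : ℝ) : ℂ) := by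
  rw [sabrExtension, intervalIntegral.integral_of_le (by positivity),
    integral_Ioc_eq_integral_Ioo,
    setIntegral_congr_fun measurableSet_Ioo fun θ hθ => sabrIntegrand_ofReal hu a hθ,
    integral_complex_ofReal, integral_eq_two_mul_integral_sabrSubst hu]
  push_cast
  ring

theorem exists_holomorphic_odd_extension_of_sabrPayoff_general (σ₀ : ℝ) :
    ∃ G : ℂ → ℂ,
      DifferentiableOn ℂ G {u : ℂ | |u.im| < Real.pi} ∧
      (∀ u : ℂ, |u.im| < Real.pi → G (-u) = -G u) ∧
      (∀ u : ℝ, 0 < u → G (u : ℂ) = (sabrPayoff σ₀ u : ℂ)) :=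
  ⟨sabrExtension (σ₀ / 2), differentiableOn_sabrExtension _, fun u _ => sabrExtension_neg _ u,
    fun _ hu => sabrExtension_ofReal hu _⟩

/-- There is a function `G` holomorphic on the strip `|Im u| < π`, odd there, and which
agrees with the SABR payoff function `g` on the positive real axis. -/
theorem exists_holomorphic_odd_extension_of_sabrPayoff (σ₀ : ℝ) (hσ₀ : 0 < σ₀) :
    ∃ G : ℂ → ℂ,
      DifferentiableOn ℂ G {u : ℂ | |u.im| < Real.pi} ∧
      (∀ u : ℂ, |u.im| < Real.pi → G (-u) = -G u) ∧
      (∀ u : ℝ, 0 < u → G (u : ℂ) = (sabrPayoff σ₀ u : ℂ)) :=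
  exists_holomorphic_odd_extension_of_sabrPayoff_general σ₀
end

section
/- Fix σ₀ > 0 and T > 0, and set V_err(T) = ∫_π^∞ e^{−u²/(2T)} g(u) du/√(2πT). Then |V_err(T)| ≤ √2·σ₀·[ √(T/(2π))·e^{−π(π−T)/(2T)} + (1/2)·e^{T/8}·T·Φ((T/2 − π)/√T) ], where Φ(x) = ∫_{−∞}^x e^{−t²/2} dt/√(2π) is the cumulative distribution function of the standard normal distribution. -/
open scoped Real

/-- The standard normal cumulative distribution function `Φ`. -/
noncomputable def stdNormalCDF (x : ℝ) : ℝ :=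
  ∫ t in Set.Iic x, Real.exp (-t ^ 2 / 2) / Real.sqrt (2 * π)

/-!
Bounding `|sin x| ≤ |x|` and using the factorization
`cosh u - cosh s = eᵘ (1 - e^(-(u+s))) (1 - e^(-(u-s))) / 2`, the integrand of `g` is at most
`|σ₀| e^(-u/2) (1 + (u - s)^(-1/2))`, whose integral over `[0, u]` is
`|σ₀| e^(-u/2) (u + 2√u)`; hence `|g u| ≤ √2 |σ₀| u e^(u/2)` for `u ≥ 2`.
Completing the square,
`e^(-u²/(2T)) e^(u/2) = e^(T/8) e^(-(u - T/2)²/(2T))`, so the tail is bounded by the first moment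
of a Gaussian over `(π, ∞)`, which has the explicit antiderivative
`-T e^(-(u-m)²/(2T)) + m √(2πT) Φ((u-m)/√T)`.
-/

open MeasureTheory ProbabilityTheory Real Set Filter Topology

noncomputable def sabrKernel (σ₀ u s : ℝ) : ℝ :=
  sin (σ₀ / 2 * sinh s) / (sinh s * √(cosh u - cosh s))

lemma cosh_sub_cosh_eq (u s : ℝ) :
    cosh u - cosh s = exp u * (1 - exp (-(u + s))) * (1 - exp (-(u - s))) / 2 := by
  simp only [cosh_eq, neg_add, neg_sub, exp_add, exp_sub, exp_neg]
  field_simp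
  ring

lemma div_one_add_le_one_sub_exp_neg {x : ℝ} (hx : 0 ≤ x) : x / (1 + x) ≤ 1 - exp (-x) := by
  have h : exp (-x) ≤ 1 / (1 + x) := by
    rw [exp_neg, ← one_div]
    exact one_div_le_one_div_of_le (by positivity) (by linarith [add_one_le_exp x])
  calc x / (1 + x) = 1 - 1 / (1 + x) := by field_simp; ring
    _ ≤ 1 - exp (-x) := by linarith

lemma cosh_sub_cosh_ge {u s : ℝ} (hu : 1 ≤ u) (hs : 0 ≤ s) (hsu : s ≤ u) :
    exp u * ((u - s) / (1 + (u - s))) / 4 ≤ cosh u - cosh s := by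
  have hsum : 1 / 2 ≤ 1 - exp (-(u + s)) :=
    calc (1 : ℝ) / 2 ≤ (u + s) / (1 + (u + s)) := by
          rw [div_le_div_iff₀ two_pos (by linarith)]; linarith
      _ ≤ 1 - exp (-(u + s)) := div_one_add_le_one_sub_exp_neg (by linarith)
  have hdiff := div_one_add_le_one_sub_exp_neg (sub_nonneg.2 hsu)
  rw [cosh_sub_cosh_eq]
  calc exp u * ((u - s) / (1 + (u - s))) / 4
      = exp u * (1 / 2) * ((u - s) / (1 + (u - s))) / 2 := by ring
    _ ≤ exp u * (1 - exp (-(u + s))) * (1 - exp (-(u - s))) / 2 := by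
      gcongr

lemma sqrt_add_le_add_sqrt {x y : ℝ} (hx : 0 ≤ x) (hy : 0 ≤ y) :
    √(x + y) ≤ √x + √y := by
  rw [sqrt_le_left (by positivity), add_sq, sq_sqrt hx, sq_sqrt hy]
  nlinarith [sqrt_nonneg x, sqrt_nonneg y]

lemma inv_sqrt_cosh_sub_cosh_le {u s : ℝ} (hu : 1 ≤ u) (hs : 0 ≤ s) (hsu : s < u) :
    (√(cosh u - cosh s))⁻¹ ≤ 2 * exp (-(u / 2)) * (1 + (u - s) ^ (-(1 / 2) : ℝ)) := by
  set t := u - s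
  have ht0 : 0 < t := sub_pos.2 hsu
  have hlow := cosh_sub_cosh_ge hu hs hsu.le
  have hinv : (cosh u - cosh s)⁻¹ ≤ 2 ^ 2 * exp (-(u / 2)) ^ 2 * (1 + t⁻¹) := by
    calc (cosh u - cosh s)⁻¹ ≤ (exp u * (t / (1 + t)) / 4)⁻¹ :=
          inv_anti₀ (by positivity) hlow
      _ = 2 ^ 2 * exp (-(u / 2)) ^ 2 * (1 + t⁻¹) := by
        rw [← exp_nat_mul, Nat.cast_ofNat, show (2 : ℝ) * -(u / 2) = -u by ring, exp_neg]
        field_simp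
        ring
  calc (√(cosh u - cosh s))⁻¹ = √((cosh u - cosh s)⁻¹) := (sqrt_inv _).symm
    _ ≤ √(2 ^ 2 * exp (-(u / 2)) ^ 2 * (1 + t⁻¹)) := sqrt_le_sqrt hinv
    _ = 2 * exp (-(u / 2)) * √(1 + t⁻¹) := by
      rw [sqrt_mul (by positivity), sqrt_mul (by positivity), sqrt_sq (by positivity),
        sqrt_sq (by positivity)]
    _ ≤ 2 * exp (-(u / 2)) * (1 + t ^ (-(1 / 2) : ℝ)) := by
      gcongr
      calc √(1 + t⁻¹) ≤ √1 + √t⁻¹ := sqrt_add_le_add_sqrt zero_le_one (by positivity)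
        _ = 1 + t ^ (-(1 / 2) : ℝ) := by
          rw [sqrt_one, sqrt_eq_rpow, rpow_neg ht0.le, inv_rpow ht0.le]

lemma abs_sabrKernel_le_div_sqrt (σ₀ u : ℝ) {s : ℝ} (hs : 0 < s) :
    |sabrKernel σ₀ u s| ≤ |σ₀| / 2 * (√(cosh u - cosh s))⁻¹ := by
  have hsinh : 0 < sinh s := sinh_pos_iff.2 hs
  have hsin : |sin (σ₀ / 2 * sinh s) / sinh s| ≤ |σ₀| / 2 := by
    rw [abs_div, abs_of_pos hsinh, div_le_iff₀ hsinh]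
    calc |sin (σ₀ / 2 * sinh s)| ≤ |σ₀ / 2 * sinh s| := abs_sin_le_abs
      _ = |σ₀| / 2 * sinh s := by rw [abs_mul, abs_div, abs_two, abs_of_pos hsinh]
  rw [sabrKernel, div_mul_eq_div_div, div_eq_mul_inv, abs_mul,
    abs_of_nonneg (inv_nonneg.2 (sqrt_nonneg _))]
  gcongr

lemma abs_sabrKernel_le (σ₀ : ℝ) {u s : ℝ} (hu : 1 ≤ u) (hs : 0 < s) (hsu : s ≤ u) :
    |sabrKernel σ₀ u s| ≤ |σ₀| * exp (-(u / 2)) * (1 + (u - s) ^ (-(1 / 2) : ℝ)) := by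
  rcases hsu.eq_or_lt with rfl | hsu
  -- at `s = u` the kernel is `0` through `√0 = 0` and division by zero
  · simp only [sabrKernel, sub_self, sqrt_zero, mul_zero, div_zero, abs_zero]
    positivity
  calc |sabrKernel σ₀ u s| ≤ |σ₀| / 2 * (√(cosh u - cosh s))⁻¹ :=
        abs_sabrKernel_le_div_sqrt σ₀ u hs
    _ ≤ |σ₀| / 2 * (2 * exp (-(u / 2)) * (1 + (u - s) ^ (-(1 / 2) : ℝ))) := by
        gcongr
        exact inv_sqrt_cosh_sub_cosh_le hu hs.le hsu
    _ = |σ₀| * exp (-(u / 2)) * (1 + (u - s) ^ (-(1 / 2) : ℝ)) := by ring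

lemma intervalIntegrable_sub_rpow (u : ℝ) {r : ℝ} (hr : -1 < r) (a b : ℝ) :
    IntervalIntegrable (fun s => (u - s) ^ r) volume a b := by
  simpa using
    (intervalIntegral.intervalIntegrable_rpow' (a := u - a) (b := u - b) hr).comp_sub_left u

lemma integral_one_add_sub_rpow_neg_half (u : ℝ) :
    ∫ s in (0 : ℝ)..u, (1 + (u - s) ^ (-(1 / 2) : ℝ)) = u + 2 * √u := by
  rw [intervalIntegral.integral_add intervalIntegrable_const
      (intervalIntegrable_sub_rpow u (by norm_num) 0 u),
    intervalIntegral.integral_const, intervalIntegral.integral_comp_sub_left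
      (fun x => x ^ (-(1 / 2) : ℝ)), integral_rpow (Or.inl (by norm_num))]
  rw [sub_zero, sub_self, zero_rpow (by norm_num), sqrt_eq_rpow]
  norm_num
  ring

lemma two_mul_sqrt_le {u : ℝ} (hu : 2 ≤ u) : 2 * √u ≤ √2 * u := by
  calc 2 * √u = √(2 ^ 2 * u) := by rw [sqrt_mul (by norm_num), sqrt_sq zero_le_two]
    _ ≤ √(2 * u ^ 2) := sqrt_le_sqrt (by nlinarith)
    _ = √2 * u := by rw [sqrt_mul zero_le_two, sqrt_sq (by linarith)]

lemma abs_integral_sabrKernel_le (σ₀ : ℝ) {u : ℝ} (hu : 1 ≤ u) :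
    |∫ s in (0 : ℝ)..u, sabrKernel σ₀ u s| ≤
      |σ₀| * exp (-(u / 2)) * (u + 2 * √u) := by
  have hmajorant : IntervalIntegrable
      (fun s => |σ₀| * exp (-(u / 2)) * (1 + (u - s) ^ (-(1 / 2) : ℝ))) volume 0 u :=
    ((intervalIntegrable_const (c := (1 : ℝ))).add
      (intervalIntegrable_sub_rpow u (r := -(1 / 2)) (by norm_num) 0 u)).const_mul _
  calc |∫ s in (0 : ℝ)..u, sabrKernel σ₀ u s|
      ≤ |∫ s in (0 : ℝ)..u, |σ₀| * exp (-(u / 2)) * (1 + (u - s) ^ (-(1 / 2) : ℝ))| := by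
        refine (norm_eq_abs _).symm.trans_le
          (intervalIntegral.norm_integral_le_abs_of_norm_le ?_ hmajorant)
        filter_upwards [ae_restrict_mem measurableSet_uIoc] with s hs
        rw [uIoc_of_le (by linarith)] at hs
        exact abs_sabrKernel_le σ₀ hu hs.1 hs.2
    _ = |σ₀| * exp (-(u / 2)) * (u + 2 * √u) := by
        rw [intervalIntegral.integral_const_mul, integral_one_add_sub_rpow_neg_half u,
          abs_of_nonneg (by positivity)]

lemma abs_sabrPayoff_le (σ₀ : ℝ) {u : ℝ} (hu : 2 ≤ u) :
    |sabrPayoff σ₀ u| ≤ √2 * |σ₀| * u * exp (u / 2) := by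
  have hu0 : 0 ≤ u := by linarith
  have hsinh : sinh u ≤ exp (u / 2) ^ 2 / 2 := by
    rw [← exp_nat_mul, Nat.cast_ofNat, mul_div_cancel₀ u two_ne_zero, sinh_eq]
    linarith [exp_pos (-u)]
  calc |sabrPayoff σ₀ u| = sinh u * |∫ s in (0 : ℝ)..u, sabrKernel σ₀ u s| := by
        rw [sabrPayoff, abs_mul, abs_of_nonneg (sinh_nonneg_iff.2 hu0)]; rfl
    _ ≤ exp (u / 2) ^ 2 / 2 * (|σ₀| * exp (-(u / 2)) * (u + 2 * √u)) := by
        gcongr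
        exact abs_integral_sabrKernel_le σ₀ (by linarith)
    _ = |σ₀| * exp (u / 2) * (u + 2 * √u) / 2 := by
        rw [exp_neg]; field_simp
    _ ≤ |σ₀| * exp (u / 2) * (2 * √2 * u) / 2 := by
        gcongr
        nlinarith [two_mul_sqrt_le hu, one_le_sqrt.2 (one_le_two : (1 : ℝ) ≤ 2)]
    _ = √2 * |σ₀| * u * exp (u / 2) := by ring

lemma stdNormalDensity_eq_gaussianPDFReal (t : ℝ) :
    exp (-t ^ 2 / 2) / √(2 * π) = gaussianPDFReal 0 1 t := by
  simp [gaussianPDFReal, div_eq_inv_mul]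

lemma integrable_stdNormalDensity : Integrable (fun t : ℝ => exp (-t ^ 2 / 2) / √(2 * π)) := by
  simpa only [stdNormalDensity_eq_gaussianPDFReal] using integrable_gaussianPDFReal 0 1

lemma integral_stdNormalDensity : ∫ t : ℝ, exp (-t ^ 2 / 2) / √(2 * π) = 1 := by
  simpa only [stdNormalDensity_eq_gaussianPDFReal] using
    integral_gaussianPDFReal_eq_one 0 one_ne_zero

lemma hasDerivAt_stdNormalCDF (x : ℝ) :
    HasDerivAt stdNormalCDF (exp (-x ^ 2 / 2) / √(2 * π)) x := by
  have hcont : Continuous fun t : ℝ => exp (-t ^ 2 / 2) / √(2 * π) := by fun_prop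
  have hcdf : stdNormalCDF = fun y => stdNormalCDF 0 +
      ∫ t in (0 : ℝ)..y, exp (-t ^ 2 / 2) / √(2 * π) := by
    funext y
    rw [stdNormalCDF, stdNormalCDF, ← intervalIntegral.integral_Iic_sub_Iic
      integrable_stdNormalDensity.integrableOn integrable_stdNormalDensity.integrableOn]
    ring
  rw [hcdf]
  exact (intervalIntegral.integral_hasDerivAt_right (hcont.intervalIntegrable 0 x)
    (hcont.stronglyMeasurableAtFilter _ _) hcont.continuousAt).const_add _

lemma tendsto_stdNormalCDF_atTop : Tendsto stdNormalCDF atTop (𝓝 1) := by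
  rw [← integral_stdNormalDensity]
  exact (aecover_Iic tendsto_id).integral_tendsto_of_countably_generated
    integrable_stdNormalDensity

lemma stdNormalCDF_neg (x : ℝ) : stdNormalCDF (-x) = 1 - stdNormalCDF x := by
  rw [← integral_stdNormalDensity, ← intervalIntegral.integral_Iic_add_Ioi
    integrable_stdNormalDensity.integrableOn integrable_stdNormalDensity.integrableOn (b := x),
    stdNormalCDF, stdNormalCDF, ← integral_comp_neg_Ioi]
  simp only [neg_sq, add_sub_cancel_left]

lemma exp_neg_sq_div_mul_exp_half {T : ℝ} (hT : T ≠ 0) (u : ℝ) :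
    exp (-u ^ 2 / (2 * T)) * exp (u / 2) = exp (T / 8) * exp (-(u - T / 2) ^ 2 / (2 * T)) := by
  rw [← exp_add, ← exp_add]
  congr 1
  field_simp
  ring

lemma integrable_mul_exp_neg_sq_sub {T : ℝ} (hT : 0 < T) (m : ℝ) :
    Integrable (fun u : ℝ => u * exp (-(u - m) ^ 2 / (2 * T))) := by
  have hb : 0 < 1 / (2 * T) := by positivity
  have hcentered : Integrable (fun v : ℝ => (v + m) * exp (-(1 / (2 * T)) * v ^ 2)) := by
    simp only [add_mul]
    exact (integrable_mul_exp_neg_mul_sq hb).add ((integrable_exp_neg_mul_sq hb).const_mul m)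
  convert hcentered.comp_sub_right m using 2 with u
  rw [sub_add_cancel]
  congr 2
  ring

lemma integral_Ioi_mul_exp_neg_sq_sub {T : ℝ} (hT : 0 < T) (m a : ℝ) :
    ∫ u in Ioi a, u * exp (-(u - m) ^ 2 / (2 * T)) =
      T * exp (-(a - m) ^ 2 / (2 * T)) + m * √(2 * π * T) * stdNormalCDF ((m - a) / √T) := by
  have hsT : 0 < √T := sqrt_pos.2 hT
  set F : ℝ → ℝ := fun u =>
    -T * exp (-(u - m) ^ 2 / (2 * T)) + m * √(2 * π * T) * stdNormalCDF ((u - m) / √T)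
  have hderiv (x : ℝ) : HasDerivAt F (x * exp (-(x - m) ^ 2 / (2 * T))) x := by
    have hlin : HasDerivAt (fun u : ℝ => u - m) 1 x := (hasDerivAt_id x).sub_const m
    have hgauss := (((hlin.pow 2).neg.div_const (2 * T)).exp).const_mul (-T)
    have hcdf := (hasDerivAt_stdNormalCDF ((x - m) / √T)).comp x (hlin.div_const √T)
    refine (hgauss.add (hcdf.const_mul (m * √(2 * π * T)))).congr_deriv ?_
    have hexp : -((x - m) / √T) ^ 2 / 2 = -(x - m) ^ 2 / (2 * T) := by
      rw [div_pow, sq_sqrt hT.le]; ring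
    simp only [Pi.neg_apply, Pi.pow_apply, hexp, sqrt_mul (by positivity : 0 ≤ 2 * π)]
    field_simp
    ring
  have hlim : Tendsto F atTop (𝓝 (0 + m * √(2 * π * T) * 1)) := by
    have hsq : Tendsto (fun u : ℝ => -(u - m) ^ 2 / (2 * T)) atTop atBot :=
      (tendsto_neg_atTop_atBot.comp ((tendsto_pow_atTop two_ne_zero).comp
        (tendsto_atTop_add_const_right _ _ tendsto_id))).atBot_div_const (by positivity)
    refine Tendsto.add ?_ ((tendsto_stdNormalCDF_atTop.comp ?_).const_mul _)
    · simpa using (tendsto_exp_atBot.comp hsq).const_mul (-T)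
    · exact (tendsto_atTop_add_const_right _ _ tendsto_id).atTop_div_const hsT
  rw [integral_Ioi_of_hasDerivAt_of_tendsto' (fun x _ => hderiv x)
    (integrable_mul_exp_neg_sq_sub hT m).integrableOn hlim]
  simp only [F, zero_add, mul_one, ← neg_sub a m, neg_div, stdNormalCDF_neg]
  ring

lemma abs_tail_integrand_le (σ₀ : ℝ) {T u : ℝ} (hT : 0 < T) (hu : 2 ≤ u) :
    |exp (-u ^ 2 / (2 * T)) * sabrPayoff σ₀ u / √(2 * π * T)| ≤
      √2 * |σ₀| * exp (T / 8) / √(2 * π * T) * (u * exp (-(u - T / 2) ^ 2 / (2 * T))) := by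
  rw [abs_div, abs_mul, abs_of_pos (exp_pos _), abs_of_nonneg (sqrt_nonneg _)]
  calc exp (-u ^ 2 / (2 * T)) * |sabrPayoff σ₀ u| / √(2 * π * T)
      ≤ exp (-u ^ 2 / (2 * T)) * (√2 * |σ₀| * u * exp (u / 2)) / √(2 * π * T) := by
        gcongr
        exact abs_sabrPayoff_le σ₀ hu
    _ = √2 * |σ₀| * u * (exp (-u ^ 2 / (2 * T)) * exp (u / 2)) / √(2 * π * T) := by ring
    _ = _ := by rw [exp_neg_sq_div_mul_exp_half hT.ne']; ring

/-- Bound on the tail contribution `V_err(T) = ∫_π^∞ e^(−u²/(2T)) g(u) du/√(2πT)`: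
`|V_err(T)| ≤ √2 σ₀ [√(T/(2π)) e^(−π(π−T)/(2T)) + (1/2) e^(T/8) T Φ((T/2 − π)/√T)]`. -/
theorem sabr_tail_error_bound (σ₀ : ℝ) (hσ₀ : 0 < σ₀) (T : ℝ) (hT : 0 < T) :
    |∫ u in Set.Ioi π,
        Real.exp (-u ^ 2 / (2 * T)) * sabrPayoff σ₀ u / Real.sqrt (2 * π * T)| ≤
      Real.sqrt 2 * σ₀ *
        (Real.sqrt (T / (2 * π)) * Real.exp (-(π * (π - T)) / (2 * T)) +
          1 / 2 * Real.exp (T / 8) * T * stdNormalCDF ((T / 2 - π) / Real.sqrt T)) := by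
  set c := √2 * σ₀ * exp (T / 8) / √(2 * π * T)
  have hbound : ∀ u ∈ Ioi π,
      ‖exp (-u ^ 2 / (2 * T)) * sabrPayoff σ₀ u / √(2 * π * T)‖ ≤
      c * (u * exp (-(u - T / 2) ^ 2 / (2 * T))) := fun u hu => by
    simpa only [norm_eq_abs, abs_of_pos hσ₀] using
      abs_tail_integrand_le σ₀ hT (two_le_pi.trans hu.le)
  have hexp :
      exp (T / 8) * exp (-(π - T / 2) ^ 2 / (2 * T)) = exp (-(π * (π - T)) / (2 * T)) := by
    rw [← exp_neg_sq_div_mul_exp_half hT.ne', ← exp_add]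
    congr 1
    field_simp
    ring
  have hsqrt : √(T / (2 * π)) = T / √(2 * π * T) := by
    rw [sqrt_div hT.le, sqrt_mul (by positivity) T, div_mul_eq_div_div_swap, div_sqrt]
  calc |∫ u in Ioi π, exp (-u ^ 2 / (2 * T)) * sabrPayoff σ₀ u / √(2 * π * T)|
      ≤ ∫ u in Ioi π, c * (u * exp (-(u - T / 2) ^ 2 / (2 * T))) :=
        norm_integral_le_of_norm_le
          ((integrable_mul_exp_neg_sq_sub hT _).const_mul c).integrableOn
          (ae_restrict_of_forall_mem measurableSet_Ioi hbound)
    _ = c * (T * exp (-(π - T / 2) ^ 2 / (2 * T)) +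
          T / 2 * √(2 * π * T) * stdNormalCDF ((T / 2 - π) / √T)) := by
        rw [integral_const_mul, integral_Ioi_mul_exp_neg_sq_sub hT]
    _ = _ := by
        rw [← hexp, hsqrt]
        simp only [c]
        field_simp
end
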